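/- Fix n and a diagonal real n×n matrix Λ. Suppose Ψ : ℝ → Matrix n n ℝ is differentiable, satisfies the matrix ODE Ψ'(t) = −M(Ψ(t)·Λ·Ψ(t)ᵀ)·Ψ(t) for all t, and Ψ(0) is orthogonal (Ψ(0)·Ψ(0)ᵀ = 1). Then Ψ(t) is orthogonal for all t ∈ ℝ: Ψ(t)·Ψ(t)ᵀ = 1. (The Toda vector field T^Λ(Ψ) = −M(Ad_Ψ Λ)·Ψ is tangent to the compact group K = O(n), so its flow preserves O(n).) -/

import Mathlib

open Matrix

/-- The Toda projector: `M(L)_{ab} = L_{ab}` for `a < b`, `-L_{ab}` for `a > b`, `0` on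
the diagonal. -/
def todaM {n : ℕ} (L : Matrix (Fin n) (Fin n) ℝ) : Matrix (Fin n) (Fin n) ℝ :=
  Matrix.of fun a b => if a < b then L a b else if b < a then -L a b else 0

/-- Entrywise derivative of a matrix-valued curve. -/
noncomputable def matDeriv {n : ℕ} (γ : ℝ → Matrix (Fin n) (Fin n) ℝ) (t : ℝ) :
    Matrix (Fin n) (Fin n) ℝ :=
  Matrix.of fun a b => deriv (fun s => γ s a b) t

attribute [local instance] Matrix.normedAddCommGroup Matrix.normedSpace

open Set

lemma todaM_transpose {n : ℕ} {L : Matrix (Fin n) (Fin n) ℝ} (hL : L.IsSymm) :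
    (todaM L)ᵀ = -(todaM L) := by
  ext a b
  simp only [todaM, transpose_apply, neg_apply, of_apply]
  rcases lt_trichotomy a b with h | h | h
  · simp [h, not_lt.mpr h.le, hL.apply a b, h.ne']
  · simp [h, lt_irrefl]
  · simp [h, not_lt.mpr h.le, hL.apply a b, h.ne']

lemma matrix_norm_mul_le {n : ℕ} (A B : Matrix (Fin n) (Fin n) ℝ) :
    ‖A * B‖ ≤ (n : ℝ) * ‖A‖ * ‖B‖ := by
  have hn : (0 : ℝ) ≤ (n : ℝ) * ‖A‖ * ‖B‖ := by positivity
  rw [Matrix.norm_le_iff hn]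
  intro i j
  calc ‖(A * B) i j‖ = ‖∑ k, A i k * B k j‖ := by rw [Matrix.mul_apply]
    _ ≤ ∑ k, ‖A i k * B k j‖ := norm_sum_le _ _
    _ ≤ ∑ k : Fin n, ‖A‖ * ‖B‖ := by
        refine Finset.sum_le_sum fun k _ => ?_
        rw [norm_mul]
        exact mul_le_mul (Matrix.norm_entry_le_entrywise_sup_norm A)
          (Matrix.norm_entry_le_entrywise_sup_norm B) (norm_nonneg _) (norm_nonneg _)
    _ = (n : ℝ) * ‖A‖ * ‖B‖ := by simp [mul_assoc]

/-- Entrywise derivative of a matrix product. -/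
lemma hasDerivAt_entry_mul {n : ℕ} {A B : ℝ → Matrix (Fin n) (Fin n) ℝ}
    {A' B' : Matrix (Fin n) (Fin n) ℝ} {t : ℝ}
    (hA : ∀ a b, HasDerivAt (fun s => A s a b) (A' a b) t)
    (hB : ∀ a b, HasDerivAt (fun s => B s a b) (B' a b) t) (a b : Fin n) :
    HasDerivAt (fun s => (A s * B s) a b) ((A' * B t + A t * B') a b) t := by
  have : ∀ s, (A s * B s) a b = ∑ k, A s a k * B s k b := fun s => Matrix.mul_apply
  simp only [this]
  have : (A' * B t + A t * B') a b = ∑ k, (A' a k * B t k b + A t a k * B' k b) := by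
    simp [Matrix.mul_apply, Matrix.add_apply, Finset.sum_add_distrib]
  rw [this]
  exact HasDerivAt.fun_sum fun k _ => (hA a k).mul (hB k b)

/-- Matrix-level derivative from entrywise derivatives, for the entrywise sup norm. -/
lemma hasDerivAt_of_entries {n : ℕ} {F : ℝ → Matrix (Fin n) (Fin n) ℝ}
    {F' : Matrix (Fin n) (Fin n) ℝ} {t : ℝ}
    (h : ∀ a b, HasDerivAt (fun s => F s a b) (F' a b) t) :
    HasDerivAt F F' t := by
  rw [show F = fun s => (fun a b => F s a b) from rfl]
  exact hasDerivAt_pi.2 fun a => hasDerivAt_pi.2 fun b => h a b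

/-- The flow of the Toda vector field `T^Λ(Ψ) = -M(Ψ Λ Ψᵀ) Ψ` preserves the orthogonal
group: if `Ψ` solves the ODE and `Ψ 0` is orthogonal, then `Ψ t` is orthogonal
for all `t`. -/
theorem toda_group_flow_preserves_orthogonal {n : ℕ}
    (Λ : Matrix (Fin n) (Fin n) ℝ) (hΛ : Λ.IsDiag)
    (Ψ : ℝ → Matrix (Fin n) (Fin n) ℝ)
    (hdiff : ∀ a b : Fin n, Differentiable ℝ fun t => Ψ t a b)
    (hode : ∀ t : ℝ, matDeriv Ψ t = -(todaM (Ψ t * Λ * (Ψ t)ᵀ) * Ψ t))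
    (h0 : Ψ 0 * (Ψ 0)ᵀ = 1) :
    ∀ t : ℝ, Ψ t * (Ψ t)ᵀ = 1 := by
  intro t₁
  set M : ℝ → Matrix (Fin n) (Fin n) ℝ := fun t => todaM (Ψ t * Λ * (Ψ t)ᵀ) with hM
  -- entrywise derivative of Ψ
  have hΨ' : ∀ t (a b : Fin n),
      HasDerivAt (fun s => Ψ s a b) ((-(M t * Ψ t)) a b) t := by
    intro t a b
    have h1 : deriv (fun s => Ψ s a b) t = (-(M t * Ψ t)) a b := by
      have := congrFun (congrFun (hode t) a) b
      simpa [matDeriv] using this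
    exact h1 ▸ ((hdiff a b) t).hasDerivAt
  -- symmetry: M t ᵀ = -(M t)
  have hMT : ∀ t, (M t)ᵀ = -(M t) := by
    intro t
    apply todaM_transpose
    have hΛs : Λᵀ = Λ := hΛ.isSymm
    unfold Matrix.IsSymm
    rw [transpose_mul, transpose_mul, transpose_transpose, hΛs, Matrix.mul_assoc]
  -- continuity of M
  have hMc : Continuous M := by
    have hΨc : ∀ a b : Fin n, Continuous fun t => Ψ t a b := fun a b => (hdiff a b).continuous
    refine continuous_pi fun a => continuous_pi fun b => ?_
    simp only [hM, todaM, of_apply]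
    have hL : Continuous fun t => (Ψ t * Λ * (Ψ t)ᵀ) a b := by
      simp only [Matrix.mul_apply, transpose_apply]
      exact continuous_finset_sum _ fun k _ =>
        (continuous_finset_sum _ fun l _ => ((hΨc a l).mul continuous_const)).mul (hΨc b k)
    rcases lt_trichotomy a b with h | h | h
    · simpa [h] using hL
    · simp [h, lt_irrefl]
      exact continuous_const
    · simp only [not_lt.mpr h.le, h, if_false, if_true]
      exact hL.neg
  -- the interval
  set a : ℝ := -(|t₁| + 1) with ha
  set b : ℝ := |t₁| + 1 with hb
  have hab : a < b := by
    have : (0:ℝ) < |t₁| + 1 := by positivity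
    simp only [ha, hb]; linarith
  have ht₁ : t₁ ∈ Icc a b := ⟨by simp [ha]; linarith [neg_abs_le t₁], by simp [hb]; linarith [le_abs_self t₁]⟩
  have h0mem : (0:ℝ) ∈ Ioo a b := ⟨by simp [ha]; positivity, by simp [hb]; positivity⟩
  -- bound on ‖M‖ on [a,b] (via clamping)
  set clamp : ℝ → ℝ := fun t => max a (min t b) with hclamp
  have hclamp_mem : ∀ t, clamp t ∈ Icc a b :=
    fun t => ⟨le_max_left _ _, max_le hab.le (min_le_right _ _)⟩
  have hclamp_id : ∀ t ∈ Icc a b, clamp t = t := by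
    intro t ht
    simp only [hclamp]
    rw [min_eq_left ht.2, max_eq_right ht.1]
  obtain ⟨C, hC⟩ := (isCompact_Icc (a := a) (b := b)).exists_bound_of_continuousOn
    hMc.continuousOn
  have hC0 : 0 ≤ C := le_trans (norm_nonneg _) (hC a ⟨le_refl a, hab.le⟩)
  -- the vector field
  set K : NNReal := ⟨2 * n * C, by positivity⟩ with hK
  set v : ℝ → Matrix (Fin n) (Fin n) ℝ → Matrix (Fin n) (Fin n) ℝ :=
    fun t Q => Q * M (clamp t) - M (clamp t) * Q with hv
  have hlip : ∀ t, LipschitzWith K (v t) := by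
    intro t
    apply LipschitzWith.of_dist_le_mul
    intro X Y
    have hMb : ‖M (clamp t)‖ ≤ C := hC _ (hclamp_mem t)
    have key : v t X - v t Y = (X - Y) * M (clamp t) - M (clamp t) * (X - Y) := by
      simp only [hv]; noncomm_ring
    rw [dist_eq_norm, dist_eq_norm, key]
    calc ‖(X - Y) * M (clamp t) - M (clamp t) * (X - Y)‖
        ≤ ‖(X - Y) * M (clamp t)‖ + ‖M (clamp t) * (X - Y)‖ := norm_sub_le _ _
      _ ≤ (n : ℝ) * ‖X - Y‖ * ‖M (clamp t)‖ + (n : ℝ) * ‖M (clamp t)‖ * ‖X - Y‖ := by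
          gcongr <;> [exact matrix_norm_mul_le _ _; exact matrix_norm_mul_le _ _]
      _ ≤ (n : ℝ) * ‖X - Y‖ * C + (n : ℝ) * C * ‖X - Y‖ := by
          gcongr
      _ = (K : ℝ) * ‖X - Y‖ := by
          show (n : ℝ) * ‖X - Y‖ * C + (n : ℝ) * C * ‖X - Y‖ = 2 * n * C * ‖X - Y‖; ring
  -- f = Q, g = 1 both solve the ODE
  set f : ℝ → Matrix (Fin n) (Fin n) ℝ := fun t => Ψ t * (Ψ t)ᵀ with hf
  set g : ℝ → Matrix (Fin n) (Fin n) ℝ := fun _ => (1 : Matrix (Fin n) (Fin n) ℝ) with hg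
  have hfderiv : ∀ t ∈ Ioo a b, HasDerivAt f (v t (f t)) t := by
    intro t ht
    have hct : clamp t = t := hclamp_id t (Ioo_subset_Icc_self ht)
    have hvft : v t (f t) = f t * M t - M t * f t := by rw [hv]; simp [hct]
    rw [hvft]
    apply hasDerivAt_of_entries
    intro p q
    have hT : ∀ a' b' : Fin n, HasDerivAt (fun s => (Ψ s)ᵀ a' b')
        (((-(M t * Ψ t))ᵀ) a' b') t := fun a' b' => hΨ' t b' a'
    have heqd : (-(M t * Ψ t)) * (Ψ t)ᵀ + Ψ t * (-(M t * Ψ t))ᵀ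
        = f t * M t - M t * f t := by
      have h2 : (-(M t * Ψ t))ᵀ = (Ψ t)ᵀ * (M t) := by
        rw [transpose_neg, transpose_mul, hMT t]
        simp [Matrix.mul_neg]
      rw [h2]
      simp only [hf, Matrix.neg_mul, Matrix.mul_assoc]
      abel
    rw [← heqd]
    exact hasDerivAt_entry_mul (A := Ψ) (B := fun s => (Ψ s)ᵀ)
      (A' := -(M t * Ψ t)) (B' := (-(M t * Ψ t))ᵀ) (hΨ' t) hT p q
  have hgderiv : ∀ t ∈ Ioo a b, HasDerivAt g (v t (g t)) t := by
    intro t ht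
    have : v t (g t) = 0 := by simp [hv, hg]
    rw [this]
    exact hasDerivAt_const t _
  have hfcont : ContinuousOn f (Icc a b) := by
    refine Continuous.continuousOn ?_
    refine continuous_pi fun p => continuous_pi fun q => ?_
    simp only [hf, Matrix.mul_apply, transpose_apply]
    exact continuous_finset_sum _ fun k _ => ((hdiff p k).continuous).mul ((hdiff q k).continuous)
  have heq : EqOn f g (Icc a b) := by
    refine ODE_solution_unique_of_mem_Icc (s := fun _ => univ)
      (fun t _ => (hlip t).lipschitzOnWith) h0mem hfcont hfderiv (fun _ _ => trivial)
      continuous_const.continuousOn hgderiv (fun _ _ => trivial) ?_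
    simp [hf, hg, h0]
  exact heq ht₁
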